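/- With G the directed hypergraph on V ∪ W constructed from undirected hypergraphs H₁,…,Hₙ by adding a directed hyperedge (e, {wᵢ}) for each e ∈ Eᵢ: for every i and S ⊆ V, cut_G(S ∪ (W\{wᵢ})) + cut_G((V\S) ∪ (W\{wᵢ})) − cut_G(V ∪ (W\{wᵢ})) = cut_{Hᵢ}(S), where cut_G(C) counts directed hyperedges (T,H) with T ∩ C ≠ ∅ and H \ C ≠ ∅, and cut_{Hᵢ}(S) counts hyperedges e ∈ Eᵢ with ∅ ≠ e ∩ S ≠ e. -/
import Mathlib


def bigEdges {V I : Type*} [Fintype V] [DecidableEq V] [Fintype I] [DecidableEq I]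
    (E : I → Finset (Finset V)) : Finset (Finset V × I) :=
  Finset.univ.filter (fun p => p.1 ∈ E p.2)

def crosses {V I : Type*} [Fintype V] [DecidableEq V] [Fintype I] [DecidableEq I]
    (p : Finset V × I) (C : Finset (V ⊕ I)) : Prop :=
  (p.1.image Sum.inl ∩ C).Nonempty ∧ (({Sum.inr p.2} : Finset (V ⊕ I)) \ C).Nonempty

instance {V I : Type*} [Fintype V] [DecidableEq V] [Fintype I] [DecidableEq I]
    (p : Finset V × I) (C : Finset (V ⊕ I)) : Decidable (crosses p C) := by
  unfold crosses; infer_instance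

/-- The directed cut value `cut_G(C)`: the number of directed hyperedges crossing `C`. -/
def dirCutVal {V I : Type*} [Fintype V] [DecidableEq V] [Fintype I] [DecidableEq I]
    (E : I → Finset (Finset V)) (C : Finset (V ⊕ I)) : ℤ :=
  ((bigEdges E).filter (fun p => crosses p C)).card

def bigCut {V I : Type*} [Fintype V] [DecidableEq V] [Fintype I] [DecidableEq I]
    (S : Finset V) (i : I) : Finset (V ⊕ I) :=
  S.image Sum.inl ∪ (Finset.univ.erase i).image Sum.inr


lemma crosses_bigCut_iff {V I : Type*} [Fintype V] [DecidableEq V] [Fintype I] [DecidableEq I]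
    (p : Finset V × I) (S : Finset V) (i : I) :
    crosses p (bigCut S i) ↔ (p.1 ∩ S).Nonempty ∧ p.2 = i := by
  unfold crosses bigCut
  constructor
  · rintro ⟨⟨x, hx⟩, ⟨y, hy⟩⟩
    simp only [Finset.mem_inter, Finset.mem_image, Finset.mem_union, Finset.mem_sdiff,
      Finset.mem_singleton, Finset.mem_erase] at hx hy
    obtain ⟨⟨a, ha, rfl⟩, hx2⟩ := hx
    refine ⟨⟨a, ?_⟩, ?_⟩
    · rcases hx2 with ⟨b, hb, hab⟩ | ⟨b, hb, hab⟩
      · simp only [Sum.inl.injEq] at hab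
        subst hab
        exact Finset.mem_inter.mpr ⟨ha, hb⟩
      · simp at hab
    · obtain ⟨rfl, hy2⟩ := hy
      by_contra h
      exact hy2 (Or.inr ⟨p.2, ⟨h, Finset.mem_univ _⟩, rfl⟩)
  · rintro ⟨⟨x, hx⟩, h2⟩
    simp only [Finset.mem_inter] at hx
    refine ⟨⟨Sum.inl x, ?_⟩, ⟨Sum.inr p.2, ?_⟩⟩
    · simp [hx.1, hx.2]
    · simp [h2]

lemma dirCutVal_bigCut {V I : Type*} [Fintype V] [DecidableEq V] [Fintype I] [DecidableEq I]
    (E : I → Finset (Finset V)) (S : Finset V) (i : I) :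
    dirCutVal E (bigCut S i) =
      (((E i).filter (fun e => (e ∩ S).Nonempty)).card : ℤ) := by
  unfold dirCutVal
  congr 1
  have : (bigEdges E).filter (fun p => crosses p (bigCut S i)) =
      ((E i).filter (fun e => (e ∩ S).Nonempty)).image (fun e => (e, i)) := by
    ext p
    simp only [Finset.mem_filter, crosses_bigCut_iff, bigEdges, Finset.mem_univ, true_and,
      Finset.mem_image, Prod.ext_iff]
    constructor
    · rintro ⟨h1, h2, rfl⟩
      exact ⟨p.1, ⟨h1, h2⟩, rfl, rfl⟩
    · rintro ⟨e, ⟨he, hne⟩, rfl, rfl⟩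
      exact ⟨he, hne, rfl⟩
  rw [this, Finset.card_image_of_injective]
  intro a b hab
  simpa using congrArg Prod.fst hab

/-- the inclusion-exclusion combination of three directed cut queries to
`G` recovers the undirected cut value `cut_{Hᵢ}(S)` exactly. -/
theorem three_queries_recover_cut {V I : Type*}
    [Fintype V] [DecidableEq V] [Fintype I] [DecidableEq I]
    (hcard : Fintype.card I = Fintype.card V)
    (E : I → Finset (Finset V)) (hE : ∀ i, ∀ e ∈ E i, e.Nonempty)
    (i : I) (S : Finset V) :
    dirCutVal E (bigCut S i) + dirCutVal E (bigCut (Finset.univ \ S) i)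
        - dirCutVal E (bigCut Finset.univ i) =
      (((E i).filter (fun e => (e ∩ S).Nonempty ∧ e ∩ S ≠ e)).card : ℤ) := by
  rw [dirCutVal_bigCut, dirCutVal_bigCut, dirCutVal_bigCut]
  have key : ((E i).filter (fun e => (e ∩ S).Nonempty)).card
      + ((E i).filter (fun e => (e ∩ (Finset.univ \ S)).Nonempty)).card
      = ((E i).filter (fun e => (e ∩ Finset.univ).Nonempty)).card
      + ((E i).filter (fun e => (e ∩ S).Nonempty ∧ e ∩ S ≠ e)).card := by
    rw [← Finset.card_union_add_card_inter, ← Finset.filter_or, ← Finset.filter_and]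
    congr 1
    · refine congrArg Finset.card (Finset.filter_congr ?_)
      intro e he
      constructor
      · intro _
        obtain ⟨x, hx⟩ := hE i e he
        rw [Finset.inter_univ]; exact ⟨x, hx⟩
      · intro _
        obtain ⟨x, hx⟩ := hE i e he
        by_cases h : x ∈ S
        · exact Or.inl ⟨x, Finset.mem_inter.mpr ⟨hx, h⟩⟩
        · exact Or.inr ⟨x, Finset.mem_inter.mpr ⟨hx, Finset.mem_sdiff.mpr ⟨Finset.mem_univ x, h⟩⟩⟩
    · refine congrArg Finset.card (Finset.filter_congr ?_)
      intro e _
      have : (e ∩ (Finset.univ \ S)).Nonempty ↔ e ∩ S ≠ e := by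
        constructor
        · rintro ⟨x, hx⟩ h
          simp only [Finset.mem_inter, Finset.mem_sdiff] at hx
          have hxe : x ∈ e := hx.1
          rw [← h] at hxe
          exact hx.2.2 (Finset.mem_inter.mp hxe).2
        · intro h
          by_contra hne
          apply h
          apply Finset.inter_eq_left.mpr
          intro x hx
          by_contra hxs
          exact hne ⟨x, Finset.mem_inter.mpr ⟨hx, Finset.mem_sdiff.mpr ⟨Finset.mem_univ x, hxs⟩⟩⟩
      simp [this]
  have := congrArg (fun n : ℕ => (n : ℤ)) key
  push_cast at this
  linarith
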